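/- Uniqueness of compressed partitions: for disjoint nonempty finite sets X, Y and a combination set Q over X ∪ Y, if {(P_1,S_1),...,(P_n,S_n)} and {(P'_1,S'_1),...,(P'_m,S'_m)} are both compressed (X,Y)-partitions of Q (i.e., partitions in which the subs S_i are pairwise distinct, and similarly the S'_j), then n = m and the two sets of pairs are equal. -/

import Mathlib

/-!
Since `X` and `Y` are disjoint, a set `A ∪ B` with `A ⊆ X`, `B ⊆ Y` determines `A` and `B`. Hence in
any `(X,Y)`-partition of `Q` the sub `S i` of the block containing `A ⊆ X` is the trace
`{B ⊆ Y | A ∪ B ∈ Q}`, which depends on `Q` alone. If the partition is compressed, the block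
`P i` is in turn the set of all `A ⊆ X` whose trace is `S i`. So every pair `(P i, S i)` is
determined by `Q` and any one element of `P i`, and two compressed partitions have the same pairs.
-/

/-- `P, S : Fin n → Finset (Finset α)` form an `(X,Y)`-partition of `Q`. -/
def IsPartition {α : Type*} [DecidableEq α] (X Y : Finset α) (Q : Finset (Finset α))
    {n : ℕ} (P S : Fin n → Finset (Finset α)) : Prop :=
  (∀ i, (P i).Nonempty) ∧
  (∀ i, ∀ A ∈ P i, A ⊆ X) ∧
  (∀ i, ∀ B ∈ S i, B ⊆ Y) ∧
  (∀ i j, i ≠ j → P i ∩ P j = ∅) ∧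
  (Finset.univ.biUnion P = X.powerset) ∧
  (Q = Finset.univ.biUnion fun i => Finset.image₂ (· ∪ ·) (P i) (S i))

namespace Finset

variable {α : Type*} [DecidableEq α] {X Y A B A' B' : Finset α}

theorem union_inter_eq_left_of_disjoint (h : Disjoint X Y) (hA : A ⊆ X) (hB : B ⊆ Y) :
    (A ∪ B) ∩ X = A := by
  rw [union_inter_distrib_right, inter_eq_left.mpr hA,
    disjoint_iff_inter_eq_empty.mp (h.symm.mono_left hB), union_empty]

theorem union_inj_of_disjoint (h : Disjoint X Y) (hA : A ⊆ X) (hB : B ⊆ Y) (hA' : A' ⊆ X)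
    (hB' : B' ⊆ Y) (heq : A ∪ B = A' ∪ B') : A = A' ∧ B = B' := by
  refine ⟨?_, ?_⟩
  · rw [← union_inter_eq_left_of_disjoint h hA hB, heq,
      union_inter_eq_left_of_disjoint h hA' hB']
  · rw [← union_inter_eq_left_of_disjoint h.symm hB hA, union_comm, heq, union_comm,
      union_inter_eq_left_of_disjoint h.symm hB' hA']

end Finset

def trace {α : Type*} [DecidableEq α] (Y : Finset α) (Q : Finset (Finset α)) (A : Finset α) :
    Finset (Finset α) :=
  Y.powerset.filter fun B => A ∪ B ∈ Q

namespace IsPartition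

variable {α : Type*} [DecidableEq α] {X Y : Finset α} {Q : Finset (Finset α)} {n : ℕ}
  {P S : Fin n → Finset (Finset α)}

theorem exists_mem (hPS : IsPartition X Y Q P S) {A : Finset α} (hA : A ⊆ X) :
    ∃ i, A ∈ P i := by
  have hmem : A ∈ Finset.univ.biUnion P := hPS.2.2.2.2.1 ▸ Finset.mem_powerset.mpr hA
  simpa using hmem

theorem eq_of_mem_of_mem (hPS : IsPartition X Y Q P S) {i j : Fin n} {A : Finset α}
    (hi : A ∈ P i) (hj : A ∈ P j) : i = j := by
  by_contra hij
  simpa [hPS.2.2.2.1 i j hij] using Finset.mem_inter.mpr ⟨hi, hj⟩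

theorem mem_iff (hPS : IsPartition X Y Q P S) {C : Finset α} :
    C ∈ Q ↔ ∃ i, ∃ A ∈ P i, ∃ B ∈ S i, A ∪ B = C := by
  rw [hPS.2.2.2.2.2]
  simp only [Finset.mem_biUnion, Finset.mem_univ, true_and, Finset.mem_image₂]

theorem trace_eq (hPS : IsPartition X Y Q P S) (h : Disjoint X Y) {i : Fin n} {A : Finset α}
    (hA : A ∈ P i) : trace Y Q A = S i := by
  ext B
  simp only [trace, Finset.mem_filter, Finset.mem_powerset, hPS.mem_iff]
  constructor
  · rintro ⟨hBY, j, A', hA', B', hB', hAB⟩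
    obtain ⟨rfl, rfl⟩ := Finset.union_inj_of_disjoint h (hPS.2.1 j A' hA') (hPS.2.2.1 j B' hB')
      (hPS.2.1 i A hA) hBY hAB
    rwa [← hPS.eq_of_mem_of_mem hA' hA]
  · exact fun hB => ⟨hPS.2.2.1 i B hB, i, A, hA, B, hB, rfl⟩

theorem part_eq_filter_trace (hPS : IsPartition X Y Q P S) (h : Disjoint X Y)
    (hS : Function.Injective S) (i : Fin n) :
    P i = X.powerset.filter fun A => trace Y Q A = S i := by
  ext A
  simp only [Finset.mem_filter, Finset.mem_powerset]
  refine ⟨fun hA => ⟨hPS.2.1 i A hA, hPS.trace_eq h hA⟩, fun ⟨hAX, htrace⟩ => ?_⟩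
  obtain ⟨j, hAj⟩ := hPS.exists_mem hAX
  have hji : j = i := hS (by rw [← hPS.trace_eq h hAj, htrace])
  rwa [← hji]

theorem range_subset_range {m : ℕ} {P' S' : Fin m → Finset (Finset α)}
    (hPS : IsPartition X Y Q P S) (hPS' : IsPartition X Y Q P' S') (h : Disjoint X Y)
    (hS : Function.Injective S) (hS' : Function.Injective S') :
    Set.range (fun i => (P i, S i)) ⊆ Set.range (fun j => (P' j, S' j)) := by
  rintro _ ⟨i, rfl⟩
  obtain ⟨A, hA⟩ := hPS.1 i
  obtain ⟨j, hAj⟩ := hPS'.exists_mem (hPS.2.1 i A hA)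
  have hSS : S' j = S i := by rw [← hPS.trace_eq h hA, hPS'.trace_eq h hAj]
  refine ⟨j, Prod.ext ?_ hSS⟩
  dsimp only
  rw [hPS.part_eq_filter_trace h hS, hPS'.part_eq_filter_trace h hS', hSS]

end IsPartition

theorem compressed_partition_unique_general {α : Type*} [DecidableEq α] (X Y : Finset α)
    (h : Disjoint X Y)
    (Q : Finset (Finset α))
    {n m : ℕ} (P S : Fin n → Finset (Finset α)) (P' S' : Fin m → Finset (Finset α))
    (hPS : IsPartition X Y Q P S) (hPS' : IsPartition X Y Q P' S')
    (hcomp : ∀ i j, i ≠ j → S i ≠ S j) (hcomp' : ∀ i j, i ≠ j → S' i ≠ S' j) :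
    n = m ∧ Set.range (fun i => (P i, S i)) = Set.range (fun j => (P' j, S' j)) := by
  have hS := Function.injective_iff_pairwise_ne.mpr hcomp
  have hS' := Function.injective_iff_pairwise_ne.mpr hcomp'
  have hrange : Set.range (fun i => (P i, S i)) = Set.range (fun j => (P' j, S' j)) :=
    (hPS.range_subset_range hPS' h hS hS').antisymm
      (hPS'.range_subset_range hPS h hS' hS)
  refine ⟨?_, hrange⟩
  have hpair : Function.Injective fun i => (P i, S i) := fun i j hij => hS (congrArg Prod.snd hij)
  have hpair' : Function.Injective fun j => (P' j, S' j) :=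
    fun i j hij => hS' (congrArg Prod.snd hij)
  calc n = Nat.card (Fin n) := (Nat.card_fin n).symm
    _ = (Set.range fun i => (P i, S i)).ncard := (Set.ncard_range_of_injective hpair).symm
    _ = (Set.range fun j => (P' j, S' j)).ncard := by rw [hrange]
    _ = m := (Set.ncard_range_of_injective hpair').trans (Nat.card_fin m)

/-- Uniqueness of compressed (X,Y)-partitions. -/
theorem compressed_partition_unique {α : Type*} [DecidableEq α] (X Y : Finset α)
    (h : Disjoint X Y) (hX : X.Nonempty) (hY : Y.Nonempty)
    (Q : Finset (Finset α)) (hQ : ∀ A ∈ Q, A ⊆ X ∪ Y)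
    {n m : ℕ} (P S : Fin n → Finset (Finset α)) (P' S' : Fin m → Finset (Finset α))
    (hPS : IsPartition X Y Q P S) (hPS' : IsPartition X Y Q P' S')
    (hcomp : ∀ i j, i ≠ j → S i ≠ S j) (hcomp' : ∀ i j, i ≠ j → S' i ≠ S' j) :
    n = m ∧ Set.range (fun i => (P i, S i)) = Set.range (fun j => (P' j, S' j)) :=
  compressed_partition_unique_general X Y h Q P S P' S' hPS hPS' hcomp hcomp'
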